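/- arXiv:1201.4021 — 8 statements merged into one kernel-verified Lean document; each statement's English description precedes it below -/
import Mathlib

section
/- Let t be a positive integer and let v be a ±1-vector of length 4t. Then v is orthogonal to each of the three normalized rows r1, r2, r3 if and only if there exists an integer k with 0 ≤ k ≤ t such that v has exactly k entries equal to -1 among the positions in Q1, exactly t−k entries equal to -1 in Q2, exactly t−k entries equal to -1 in Q3, and exactly k entries equal to -1 in Q4. -/
open Finset

/-- A ±1-vector of length `4t`. -/
def IsPMVector (t : ℕ) (v : Fin (4 * t) → ℤ) : Prop :=
  ∀ i, v i = 1 ∨ v i = -1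

/-- Orthogonality of vectors of length `4t`. -/
def Orth (t : ℕ) (v w : Fin (4 * t) → ℤ) : Prop :=
  ∑ i, v i * w i = 0

/-- First normalized row: all ones. -/
def r1 (t : ℕ) : Fin (4 * t) → ℤ := fun _ => 1

/-- Second normalized row: `1` on Q1 ∪ Q2, `-1` on Q3 ∪ Q4. -/
def r2 (t : ℕ) : Fin (4 * t) → ℤ := fun i => if (i : ℕ) < 2 * t then 1 else -1

/-- Third normalized row: `1` on Q1 ∪ Q3, `-1` on Q2 ∪ Q4. -/
def r3 (t : ℕ) : Fin (4 * t) → ℤ :=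
  fun i => if (i : ℕ) < t ∨ (2 * t ≤ (i : ℕ) ∧ (i : ℕ) < 3 * t) then 1 else -1

/-- A vertex of the Hadamard graph `G_t`: a ±1-vector of length `4t`
orthogonal to each of the three normalized rows. -/
def IsVertex (t : ℕ) (v : Fin (4 * t) → ℤ) : Prop :=
  IsPMVector t v ∧ Orth t v (r1 t) ∧ Orth t v (r2 t) ∧ Orth t v (r3 t)

/-- Number of entries of `v` equal to `-1` in quarter `Qⱼ₊₁ = [j*t, (j+1)*t)`, `j = 0,1,2,3`. -/
def negCount (t : ℕ) (v : Fin (4 * t) → ℤ) (j : ℕ) : ℕ :=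
  (univ.filter fun i : Fin (4 * t) =>
    j * t ≤ (i : ℕ) ∧ (i : ℕ) < (j + 1) * t ∧ v i = -1).card

/-- A `k`-vertex of `G_t`: a vertex with exactly `k` entries equal to `-1` in the
first quarter. -/
def IsKVertex (t k : ℕ) (v : Fin (4 * t) → ℤ) : Prop :=
  IsVertex t v ∧ negCount t v 0 = k

/-- The `j`-th quarter as a finset of indices. -/
def Qset (t j : ℕ) : Finset (Fin (4 * t)) :=
  univ.filter fun i => j * t ≤ (i : ℕ) ∧ (i : ℕ) < j * t + t

lemma mem_Qset {t j : ℕ} {i : Fin (4 * t)} :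
    i ∈ Qset t j ↔ j * t ≤ (i : ℕ) ∧ (i : ℕ) < j * t + t := by
  simp [Qset]

lemma card_Qset {t j : ℕ} (hj : j < 4) : (Qset t j).card = t := by
  have h1 : (Qset t j).card =
      ((Finset.range (4 * t)).filter fun i => j * t ≤ i ∧ i < j * t + t).card := by
    rw [Qset, Finset.card_filter, Finset.card_filter]
    exact Fin.sum_univ_eq_sum_range (fun n => if j * t ≤ n ∧ n < j * t + t then (1 : ℕ) else 0)
      (4 * t)
  have h2 : ((Finset.range (4 * t)).filter fun i => j * t ≤ i ∧ i < j * t + t)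
      = Finset.Ico (j * t) (j * t + t) := by
    ext i
    simp only [Finset.mem_filter, Finset.mem_range, Finset.mem_Ico]
    have hb : j * t + t ≤ 4 * t := by
      have : j + 1 ≤ 4 := hj
      calc j * t + t = (j + 1) * t := by ring
        _ ≤ 4 * t := Nat.mul_le_mul_right t this
    omega
  rw [h1, h2, Nat.card_Ico]
  omega

lemma negCount_eq (t : ℕ) (v : Fin (4 * t) → ℤ) (j : ℕ) :
    negCount t v j = ((Qset t j).filter fun i => v i = -1).card := by
  rw [negCount, Qset, Finset.filter_filter]
  congr 1
  ext i
  simp [add_one_mul, and_assoc]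

lemma negCount_le (t : ℕ) (v : Fin (4 * t) → ℤ) {j : ℕ} (hj : j < 4) :
    negCount t v j ≤ t := by
  rw [negCount_eq]
  calc ((Qset t j).filter fun i => v i = -1).card ≤ (Qset t j).card :=
        Finset.card_filter_le _ _
    _ = t := card_Qset hj

lemma sum_Qset (t : ℕ) (v : Fin (4 * t) → ℤ) (hv : IsPMVector t v) {j : ℕ} (hj : j < 4) :
    ∑ i ∈ Qset t j, v i = (t : ℤ) - 2 * negCount t v j := by
  have h1 : ∑ i ∈ Qset t j, v i
      = ∑ i ∈ Qset t j, (if v i = -1 then (-1 : ℤ) else 1) := by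
    refine Finset.sum_congr rfl fun i _ => ?_
    rcases hv i with h | h <;> simp [h]
  rw [h1, Finset.sum_ite, Finset.sum_const, Finset.sum_const]
  have hc := Finset.card_filter_add_card_filter_not
    (s := Qset t j) (p := fun i => v i = -1)
  rw [card_Qset hj] at hc
  rw [← negCount_eq] at hc
  have hn : ((Qset t j).filter fun i => ¬ v i = -1).card = t - negCount t v j := by
    omega
  rw [← negCount_eq, hn]
  have hle := negCount_le t v hj
  rw [nsmul_eq_mul, nsmul_eq_mul, Nat.cast_sub hle]
  push_cast
  ring

lemma univ_eq_quarters (t : ℕ) :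
    (univ : Finset (Fin (4 * t))) = Qset t 0 ∪ Qset t 1 ∪ Qset t 2 ∪ Qset t 3 := by
  ext i
  have := i.isLt
  simp only [Finset.mem_union, mem_Qset, Finset.mem_univ, true_iff]
  omega

lemma sum_split (t : ℕ) (f : Fin (4 * t) → ℤ) :
    ∑ i, f i = ∑ i ∈ Qset t 0, f i + ∑ i ∈ Qset t 1, f i
      + ∑ i ∈ Qset t 2, f i + ∑ i ∈ Qset t 3, f i := by
  have d01 : Disjoint (Qset t 0) (Qset t 1) := by
    rw [Finset.disjoint_left]; intro i h1 h2
    rw [mem_Qset] at h1 h2; omega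
  have d012 : Disjoint (Qset t 0 ∪ Qset t 1) (Qset t 2) := by
    rw [Finset.disjoint_left]; intro i h1 h2
    rw [Finset.mem_union, mem_Qset, mem_Qset] at h1
    rw [mem_Qset] at h2; omega
  have d0123 : Disjoint (Qset t 0 ∪ Qset t 1 ∪ Qset t 2) (Qset t 3) := by
    rw [Finset.disjoint_left]; intro i h1 h2
    rw [Finset.mem_union, Finset.mem_union, mem_Qset, mem_Qset, mem_Qset] at h1
    rw [mem_Qset] at h2; omega
  rw [univ_eq_quarters t, Finset.sum_union d0123, Finset.sum_union d012,
    Finset.sum_union d01]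

/-- a ±1-vector `v` of length `4t` is orthogonal to the three normalized
rows iff for some `0 ≤ k ≤ t` its `-1` entries are distributed as `k, t-k, t-k, k`
among the four quarters. -/
theorem stmt_0 (t : ℕ) (ht : 0 < t) (v : Fin (4 * t) → ℤ) (hv : IsPMVector t v) :
    (Orth t v (r1 t) ∧ Orth t v (r2 t) ∧ Orth t v (r3 t)) ↔
      ∃ k, k ≤ t ∧ negCount t v 0 = k ∧ negCount t v 1 = t - k ∧
        negCount t v 2 = t - k ∧ negCount t v 3 = k := by
  set n0 := negCount t v 0 with hn0
  set n1 := negCount t v 1 with hn1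
  set n2 := negCount t v 2 with hn2
  set n3 := negCount t v 3 with hn3
  have e0 : ∑ i ∈ Qset t 0, v i = (t : ℤ) - 2 * n0 := sum_Qset t v hv (by norm_num)
  have e1 : ∑ i ∈ Qset t 1, v i = (t : ℤ) - 2 * n1 := sum_Qset t v hv (by norm_num)
  have e2 : ∑ i ∈ Qset t 2, v i = (t : ℤ) - 2 * n2 := sum_Qset t v hv (by norm_num)
  have e3 : ∑ i ∈ Qset t 3, v i = (t : ℤ) - 2 * n3 := sum_Qset t v hv (by norm_num)
  have b0 : n0 ≤ t := negCount_le t v (by norm_num)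
  have b1 : n1 ≤ t := negCount_le t v (by norm_num)
  have b2 : n2 ≤ t := negCount_le t v (by norm_num)
  have b3 : n3 ≤ t := negCount_le t v (by norm_num)
  -- Orthogonality to r1
  have h1 : Orth t v (r1 t) ↔
      ((t : ℤ) - 2 * n0) + ((t : ℤ) - 2 * n1) + ((t : ℤ) - 2 * n2) + ((t : ℤ) - 2 * n3) = 0 := by
    unfold Orth r1
    simp only [mul_one]
    rw [sum_split t v, e0, e1, e2, e3]
  -- Orthogonality to r2
  have h2 : Orth t v (r2 t) ↔
      ((t : ℤ) - 2 * n0) + ((t : ℤ) - 2 * n1) - ((t : ℤ) - 2 * n2) - ((t : ℤ) - 2 * n3) = 0 := by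
    unfold Orth
    rw [sum_split t (fun i => v i * r2 t i)]
    have q0 : ∑ i ∈ Qset t 0, v i * r2 t i = ∑ i ∈ Qset t 0, v i := by
      refine Finset.sum_congr rfl fun i hi => ?_
      rw [mem_Qset] at hi
      rw [r2, if_pos (by omega)]; ring
    have q1 : ∑ i ∈ Qset t 1, v i * r2 t i = ∑ i ∈ Qset t 1, v i := by
      refine Finset.sum_congr rfl fun i hi => ?_
      rw [mem_Qset] at hi
      rw [r2, if_pos (by omega)]; ring
    have q2 : ∑ i ∈ Qset t 2, v i * r2 t i = -∑ i ∈ Qset t 2, v i := by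
      rw [← Finset.sum_neg_distrib]
      refine Finset.sum_congr rfl fun i hi => ?_
      rw [mem_Qset] at hi
      rw [r2, if_neg (by omega)]; ring
    have q3 : ∑ i ∈ Qset t 3, v i * r2 t i = -∑ i ∈ Qset t 3, v i := by
      rw [← Finset.sum_neg_distrib]
      refine Finset.sum_congr rfl fun i hi => ?_
      rw [mem_Qset] at hi
      rw [r2, if_neg (by omega)]; ring
    rw [q0, q1, q2, q3, e0, e1, e2, e3]
    constructor <;> intro h <;> linarith
  -- Orthogonality to r3
  have h3 : Orth t v (r3 t) ↔
      ((t : ℤ) - 2 * n0) - ((t : ℤ) - 2 * n1) + ((t : ℤ) - 2 * n2) - ((t : ℤ) - 2 * n3) = 0 := by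
    unfold Orth
    rw [sum_split t (fun i => v i * r3 t i)]
    have q0 : ∑ i ∈ Qset t 0, v i * r3 t i = ∑ i ∈ Qset t 0, v i := by
      refine Finset.sum_congr rfl fun i hi => ?_
      rw [mem_Qset] at hi
      rw [r3, if_pos (by omega)]; ring
    have q1 : ∑ i ∈ Qset t 1, v i * r3 t i = -∑ i ∈ Qset t 1, v i := by
      rw [← Finset.sum_neg_distrib]
      refine Finset.sum_congr rfl fun i hi => ?_
      rw [mem_Qset] at hi
      rw [r3, if_neg (by omega)]; ring
    have q2 : ∑ i ∈ Qset t 2, v i * r3 t i = ∑ i ∈ Qset t 2, v i := by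
      refine Finset.sum_congr rfl fun i hi => ?_
      rw [mem_Qset] at hi
      rw [r3, if_pos (by omega)]; ring
    have q3 : ∑ i ∈ Qset t 3, v i * r3 t i = -∑ i ∈ Qset t 3, v i := by
      rw [← Finset.sum_neg_distrib]
      refine Finset.sum_congr rfl fun i hi => ?_
      rw [mem_Qset] at hi
      rw [r3, if_neg (by omega)]; ring
    rw [q0, q1, q2, q3, e0, e1, e2, e3]
    constructor <;> intro h <;> linarith
  rw [h1, h2, h3]
  constructor
  · rintro ⟨o1, o2, o3⟩
    exact ⟨n0, by omega, rfl, by omega, by omega, by omega⟩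
  · rintro ⟨k, hk, hk0, hk1, hk2, hk3⟩
    refine ⟨by omega, by omega, by omega⟩
end

section
/- Let t be a positive integer. The set of vertices of the Hadamard graph G_t, i.e., the set of ±1-vectors of length 4t orthogonal to each of r1, r2 and r3, has cardinality ∑_{k=0}^{t} (binom(t,k))^4. -/
open Finset

/-!
Identify `Fin (4t)` with `Fin 4 × Fin t`, so that a ±1-vector is the same as the quadruple
`(A₀, A₁, A₂, A₃)` of sets of positions of its `-1` entries in the four quarters. The entries of
quarter `j` sum to `t - 2|Aⱼ|`, and `r1, r2, r3` are constant on quarters, so orthogonality to them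
is a linear system in the `|Aⱼ|` whose solutions are `|A₁| = |A₂| = t - k`, `|A₃| = |A₀| = k`.
For fixed `k` this leaves `C(t,k)⁴` quadruples.
-/

section SignVec

variable {m n : ℕ}

/-- Block `j` of `Fin (m * n)` is `{j * n, …, j * n + n - 1}`, since
`finProdFinEquiv (j, r) = r + n * j`; for `m = 4`, `n = t` the blocks are the quarters. -/
def signVec (A : Fin m → Finset (Fin n)) (i : Fin (m * n)) : ℤ :=
  if (finProdFinEquiv.symm i).2 ∈ A (finProdFinEquiv.symm i).1 then -1 else 1

@[simp]
lemma signVec_finProdFinEquiv (A : Fin m → Finset (Fin n)) (j : Fin m) (r : Fin n) :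
    signVec A (finProdFinEquiv (j, r)) = if r ∈ A j then -1 else 1 := by
  simp [signVec]

lemma signVec_injective : Function.Injective (signVec (m := m) (n := n)) := by
  intro A B h
  funext j
  ext r
  have := congrFun h (finProdFinEquiv (j, r))
  simp only [signVec_finProdFinEquiv] at this
  split_ifs at this <;> simp_all

lemma exists_signVec_eq {v : Fin (m * n) → ℤ} (hv : ∀ i, v i = 1 ∨ v i = -1) :
    ∃ A : Fin m → Finset (Fin n), signVec A = v := by
  refine ⟨fun j => {r | v (finProdFinEquiv (j, r)) = -1}, funext fun i => ?_⟩
  obtain ⟨⟨j, r⟩, rfl⟩ := finProdFinEquiv.surjective i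
  rcases hv (finProdFinEquiv (j, r)) with h | h <;> simp [h]

lemma sum_ite_mem_neg_one_one {α : Type*} [Fintype α] [DecidableEq α] (A : Finset α) :
    ∑ r, (if r ∈ A then -1 else 1 : ℤ) = Fintype.card α - 2 * #A := by
  have h : ∀ r, (if r ∈ A then -1 else 1 : ℤ) = 1 - 2 * if r ∈ A then 1 else 0 :=
    fun r => by split_ifs <;> norm_num
  simp only [h, sum_sub_distrib, ← mul_sum, sum_boole, filter_mem_eq_inter, univ_inter]
  simp

lemma sum_signVec_mul_of_blockwise_const (A : Fin m → Finset (Fin n)) {w : Fin (m * n) → ℤ}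
    (c : Fin m → ℤ) (hw : ∀ j r, w (finProdFinEquiv (j, r)) = c j) :
    ∑ i, signVec A i * w i = ∑ j, c j * (n - 2 * #(A j)) := by
  rw [← finProdFinEquiv.sum_comp, Fintype.sum_prod_type]
  refine sum_congr rfl fun j _ => ?_
  simp only [signVec_finProdFinEquiv, hw, ← sum_mul, sum_ite_mem_neg_one_one, Fintype.card_fin]
  ring

end SignVec

section Quarters

variable {t : ℕ}

lemma r2_finProdFinEquiv (j : Fin 4) (r : Fin t) :
    r2 t (finProdFinEquiv (j, r)) = ![1, 1, -1, -1] j := by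
  have := r.isLt
  fin_cases j <;> simp [r2, finProdFinEquiv] <;> omega

lemma r3_finProdFinEquiv (j : Fin 4) (r : Fin t) :
    r3 t (finProdFinEquiv (j, r)) = ![1, -1, 1, -1] j := by
  have := r.isLt
  fin_cases j <;> simp [r3, finProdFinEquiv] <;> omega

def IsBalanced (A : Fin 4 → Finset (Fin t)) : Prop :=
  #(A 0) + #(A 1) = t ∧ #(A 0) + #(A 2) = t ∧ #(A 3) = #(A 0)

lemma isVertex_signVec_iff (A : Fin 4 → Finset (Fin t)) :
    IsVertex t (signVec A) ↔ IsBalanced A := by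
  have orth_r1 := sum_signVec_mul_of_blockwise_const (w := r1 t) A (fun _ => 1) fun _ _ => rfl
  have orth_r2 := sum_signVec_mul_of_blockwise_const A _ r2_finProdFinEquiv
  have orth_r3 := sum_signVec_mul_of_blockwise_const A _ r3_finProdFinEquiv
  have isPM : IsPMVector t (signVec A) := fun i => by unfold signVec; split_ifs <;> simp
  simp only [Fin.sum_univ_four, Matrix.cons_val_zero, Matrix.cons_val_one, Matrix.cons_val,
    one_mul, neg_mul] at orth_r1 orth_r2 orth_r3
  simp only [IsVertex, Orth, isPM, true_and, IsBalanced, orth_r1, orth_r2, orth_r3]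
  omega

instance : DecidablePred (IsBalanced (t := t)) :=
  fun _ => inferInstanceAs (Decidable (_ ∧ _ ∧ _))

lemma filter_isBalanced_and_card_zero_eq (k : ℕ) (hk : k ≤ t) :
    ({A | IsBalanced A ∧ #(A 0) = k} : Finset (Fin 4 → Finset (Fin t))) =
      Fintype.piFinset fun j => powersetCard (![k, t - k, t - k, k] j) univ := by
  ext A
  rw [mem_filter_univ]
  simp only [IsBalanced, Fintype.mem_piFinset, mem_powersetCard_univ, Fin.forall_fin_succ,
    Matrix.cons_val_zero, Matrix.cons_val_succ, Fin.succ_zero_eq_one, Fin.succ_one_eq_two,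
    Matrix.cons_val_fin_one, Fin.reduceSucc, IsEmpty.forall_iff, and_true]
  omega

lemma card_isBalanced :
    #{A : Fin 4 → Finset (Fin t) | IsBalanced A} = ∑ k ∈ range (t + 1), t.choose k ^ 4 := by
  rw [card_eq_sum_card_fiberwise (f := fun A => #(A 0)) (t := range (t + 1))
    fun A _ => mem_range_succ_iff.2 (card_le_univ _ |>.trans_eq (Fintype.card_fin t))]
  refine sum_congr rfl fun k hk => ?_
  have hk : k ≤ t := mem_range_succ_iff.1 hk
  rw [filter_filter, filter_isBalanced_and_card_zero_eq k hk]
  simp only [Fintype.card_piFinset, card_powersetCard, card_univ, Fintype.card_fin,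
    Fin.prod_univ_four, Matrix.cons_val_zero, Matrix.cons_val_one, Matrix.cons_val,
    Nat.choose_symm hk]
  ring

end Quarters

theorem stmt_1_general (t : ℕ) :
    {v : Fin (4 * t) → ℤ | IsVertex t v}.ncard =
      ∑ k ∈ Finset.range (t + 1), (Nat.choose t k) ^ 4 := by
  have vertices_eq : {v : Fin (4 * t) → ℤ | IsVertex t v} = signVec '' {A | IsBalanced A} := by
    ext v
    refine ⟨fun hv => ?_, ?_⟩
    · obtain ⟨A, rfl⟩ := exists_signVec_eq hv.1
      exact ⟨A, (isVertex_signVec_iff A).1 hv, rfl⟩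
    · rintro ⟨A, hA, rfl⟩
      exact (isVertex_signVec_iff A).2 hA
  rw [vertices_eq, Set.ncard_image_of_injective _ signVec_injective, ← card_isBalanced,
    ← Set.ncard_coe_finset, coe_filter_univ]

/-- the number of vertices of `G_t` is `∑_{k=0}^{t} C(t,k)^4`. -/
theorem stmt_1 (t : ℕ) (ht : 0 < t) :
    {v : Fin (4 * t) → ℤ | IsVertex t v}.ncard =
      ∑ k ∈ Finset.range (t + 1), (Nat.choose t k) ^ 4 :=
  stmt_1_general t
end

section
/- Let t be a positive integer, let v be a k-vertex and w an s-vertex of G_t (0 ≤ k, s ≤ t). For j = 1 and j = 4 let i_j be the number of positions in Q_j at which both v and w equal -1, and for j = 2 and j = 3 let i_j be the number of positions in Q_j at which both v and w equal +1. Then v and w are orthogonal if and only if i_1 + i_2 + i_3 + i_4 = 2s + 2k − t. -/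
open Finset

/-- Number of positions in quarter `Qⱼ₊₁` at which both `v` and `w` equal `-1`. -/
def negShare (t : ℕ) (v w : Fin (4 * t) → ℤ) (j : ℕ) : ℕ :=
  (Finset.univ.filter fun i : Fin (4 * t) =>
    j * t ≤ (i : ℕ) ∧ (i : ℕ) < (j + 1) * t ∧ v i = -1 ∧ w i = -1).card

/-- Number of positions in quarter `Qⱼ₊₁` at which both `v` and `w` equal `+1`. -/
def posShare (t : ℕ) (v w : Fin (4 * t) → ℤ) (j : ℕ) : ℕ :=
  (Finset.univ.filter fun i : Fin (4 * t) =>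
    j * t ≤ (i : ℕ) ∧ (i : ℕ) < (j + 1) * t ∧ v i = 1 ∧ w i = 1).card

/-- Number of positions in quarter `Qⱼ₊₁` at which `v` and `w` agree. -/
def agreeCount (t : ℕ) (v w : Fin (4 * t) → ℤ) (j : ℕ) : ℕ :=
  (Finset.univ.filter fun i : Fin (4 * t) =>
    j * t ≤ (i : ℕ) ∧ (i : ℕ) < (j + 1) * t ∧ v i = w i).card

lemma quarter_card (t : ℕ) :
    (∑ i : Fin (4 * t), if (i : ℕ) < t then (1 : ℤ) else 0) = t := by
  rw [Fin.sum_univ_eq_sum_range (fun n => if n < t then (1:ℤ) else 0)]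
  have h : (Finset.range (4*t)).filter (fun x => x < t) = Finset.range t := by
    ext x; simp; omega
  rw [← Finset.sum_filter, h, Finset.sum_const, card_range]
  simp

lemma rowProd (t m : ℕ) (u : Fin (4*t) → ℤ) (hu : IsVertex t u) (hm : negCount t u 0 = m) :
    ∑ i : Fin (4*t), u i * (r2 t i * r3 t i) = 4*t - 8*m := by
  have h1 : ∑ i, u i = 0 := by simpa [Orth, r1] using hu.2.1
  have h2 : ∑ i, u i * r2 t i = 0 := hu.2.2.1
  have h3 : ∑ i, u i * r3 t i = 0 := hu.2.2.2
  have key : ∀ i : Fin (4*t), u i * (1 + r2 t i) * (1 + r3 t i)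
      = 4 * (if (i:ℕ) < t then (1:ℤ) else 0)
        - 8 * (if 0*t ≤ (i:ℕ) ∧ (i:ℕ) < (0+1)*t ∧ u i = -1 then (1:ℤ) else 0) := by
    intro i
    have hi : (i:ℕ) < 4*t := i.isLt
    rcases hu.1 i with h | h <;>
      simp [r2, r3, h] <;> split_ifs <;> omega
  have expand : ∑ i : Fin (4*t), u i * (1 + r2 t i) * (1 + r3 t i)
      = (∑ i, u i) + (∑ i, u i * r2 t i) + (∑ i, u i * r3 t i)
        + ∑ i, u i * (r2 t i * r3 t i) := by
    rw [← Finset.sum_add_distrib, ← Finset.sum_add_distrib, ← Finset.sum_add_distrib]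
    exact Finset.sum_congr rfl fun i _ => by ring
  have hmz : (∑ i : Fin (4*t), if 0*t ≤ (i:ℕ) ∧ (i:ℕ) < (0+1)*t ∧ u i = -1 then (1:ℤ) else 0)
      = (m : ℤ) := by
    rw [← hm, negCount, Finset.card_filter]
    push_cast; simp
  have : ∑ i : Fin (4*t), u i * (1 + r2 t i) * (1 + r3 t i) = 4*t - 8*m := by
    rw [Finset.sum_congr rfl fun i _ => key i, Finset.sum_sub_distrib,
      ← Finset.mul_sum, ← Finset.mul_sum, quarter_card, hmz]
  rw [expand, h1, h2, h3] at this
  linarith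

/-- a `k`-vertex `v` and an `s`-vertex `w` of `G_t` are orthogonal iff
`i₁ + i₂ + i₃ + i₄ = 2s + 2k - t`, where `i₁, i₄` count shared `-1` entries in the
first and fourth quarters, and `i₂, i₃` count shared `+1` entries in the second and
third quarters. -/
theorem stmt_8 (t k s : ℕ) (ht : 0 < t) (hk : k ≤ t) (hs : s ≤ t)
    (v w : Fin (4 * t) → ℤ) (hv : IsKVertex t k v) (hw : IsKVertex t s w) :
    Orth t v w ↔
      (negShare t v w 0 : ℤ) + (posShare t v w 1 : ℤ) + (posShare t v w 2 : ℤ) +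
        (negShare t v w 3 : ℤ) = 2 * s + 2 * k - t := by
  have key : ∀ i : Fin (4*t), v i * w i
      = 4 * (if 0*t ≤ (i:ℕ) ∧ (i:ℕ) < (0+1)*t ∧ v i = -1 ∧ w i = -1 then (1:ℤ) else 0)
        + 4 * (if 1*t ≤ (i:ℕ) ∧ (i:ℕ) < (1+1)*t ∧ v i = 1 ∧ w i = 1 then (1:ℤ) else 0)
        + 4 * (if 2*t ≤ (i:ℕ) ∧ (i:ℕ) < (2+1)*t ∧ v i = 1 ∧ w i = 1 then (1:ℤ) else 0)
        + 4 * (if 3*t ≤ (i:ℕ) ∧ (i:ℕ) < (3+1)*t ∧ v i = -1 ∧ w i = -1 then (1:ℤ) else 0)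
        + v i * (r2 t i * r3 t i) + w i * (r2 t i * r3 t i) - 1 := by
    intro i
    have hi : (i:ℕ) < 4*t := i.isLt
    rcases hv.1.1 i with h1 | h1 <;> rcases hw.1.1 i with h2 | h2 <;>
      simp [r2, r3, h1, h2] <;> split_ifs <;> omega
  have c0 : (negShare t v w 0 : ℤ)
      = ∑ i : Fin (4*t), if 0*t ≤ (i:ℕ) ∧ (i:ℕ) < (0+1)*t ∧ v i = -1 ∧ w i = -1 then (1:ℤ) else 0 := by
    rw [negShare, Finset.card_filter]; push_cast; simp
  have c1 : (posShare t v w 1 : ℤ)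
      = ∑ i : Fin (4*t), if 1*t ≤ (i:ℕ) ∧ (i:ℕ) < (1+1)*t ∧ v i = 1 ∧ w i = 1 then (1:ℤ) else 0 := by
    rw [posShare, Finset.card_filter]; push_cast; simp
  have c2 : (posShare t v w 2 : ℤ)
      = ∑ i : Fin (4*t), if 2*t ≤ (i:ℕ) ∧ (i:ℕ) < (2+1)*t ∧ v i = 1 ∧ w i = 1 then (1:ℤ) else 0 := by
    rw [posShare, Finset.card_filter]; push_cast; simp
  have c3 : (negShare t v w 3 : ℤ)
      = ∑ i : Fin (4*t), if 3*t ≤ (i:ℕ) ∧ (i:ℕ) < (3+1)*t ∧ v i = -1 ∧ w i = -1 then (1:ℤ) else 0 := by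
    rw [negShare, Finset.card_filter]; push_cast; simp
  have ev := rowProd t k v hv.1 hv.2
  have ew := rowProd t s w hw.1 hw.2
  have total : ∑ i : Fin (4*t), v i * w i
      = 4 * (negShare t v w 0 : ℤ) + 4 * (posShare t v w 1 : ℤ)
        + 4 * (posShare t v w 2 : ℤ) + 4 * (negShare t v w 3 : ℤ)
        + (4*t - 8*k) + (4*t - 8*s) - 4*t := by
    rw [Finset.sum_congr rfl fun i _ => key i]
    rw [Finset.sum_sub_distrib]
    simp only [Finset.sum_add_distrib, ← Finset.mul_sum]
    rw [← c0, ← c1, ← c2, ← c3, ev, ew, Finset.sum_const, card_univ, Fintype.card_fin]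
    push_cast; ring
  rw [Orth, total]
  constructor <;> intro h <;> omega
end

section
/- Let t be a positive integer, let k be an integer with 0 ≤ k ≤ ⌊t/2⌋, and let v be a k-vertex of G_t. For an integer s with 0 ≤ s ≤ ⌊t/2⌋, there exists an s-vertex of G_t orthogonal to v if and only if s ≥ ⌈t/2⌉ − k (equivalently, if and only if 2s + 2k − t ≥ 0). -/
open Finset

/-!
A ±1-vector is described by its set of `-1` entries. Orthogonality to `r1`, `r2`, `r3` forces a
vertex to have `k, t - k, t - k, k` such entries in the four quarters, and two vertices are
orthogonal iff their `-1` sets share exactly `t` positions. Two subsets of sizes `a` and `b` of a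
quarter share at least `a + b - t` positions; in the two middle quarters this gives
`t ≥ 2 (t - k - s)`. Conversely, if `2 (k + s) ≥ t`, choose `b` with
`max k s (t - k - s) ≤ b ≤ min (t - k) (t - s) (k + s)` and place the `-1` entries of `w` so that
they avoid those of `v` in the outer quarters and meet them in `b` and `t - b` positions in the
middle ones.
-/

section SignVectors

variable {ι κ : Type*}

lemma sum_eq_card_sub_two_mul_card_filter_neg_one {v : ι → ℤ} (hv : ∀ i, v i = 1 ∨ v i = -1)
    (s : Finset ι) : ∑ i ∈ s, v i = #s - 2 * #{i ∈ s | v i = -1} := by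
  have h i : v i = 1 - 2 * if v i = -1 then 1 else 0 := by rcases hv i with h | h <;> simp [h]
  rw [sum_congr rfl fun i _ => h i, sum_sub_distrib, ← mul_sum, sum_boole]
  simp

variable [Fintype ι]

lemma sum_mul_eq_of_sign {v w : ι → ℤ} (hv : ∀ i, v i = 1 ∨ v i = -1)
    (hw : ∀ i, w i = 1 ∨ w i = -1) :
    ∑ i, v i * w i =
      ∑ i, v i + ∑ i, w i + 4 * #{i | v i = -1 ∧ w i = -1} - Fintype.card ι := by
  have h i : v i * w i = v i + w i + 4 * (if v i = -1 ∧ w i = -1 then 1 else 0) - 1 := by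
    rcases hv i with h | h <;> rcases hw i with h' | h' <;> simp [h, h']
  rw [sum_congr rfl fun i _ => h i, sum_sub_distrib, sum_add_distrib, sum_add_distrib, ← mul_sum,
    sum_boole]
  simp

lemma card_filter_add_card_filter_le (r p q : ι → Prop) [DecidablePred r] [DecidablePred p]
    [DecidablePred q] :
    #{i | r i ∧ p i} + #{i | r i ∧ q i} ≤ #{i | r i} + #{i | r i ∧ p i ∧ q i} := by
  classical
  rw [← card_union_add_card_inter]
  gcongr
  · intro i
    simp only [mem_union, mem_filter, mem_univ, true_and]
    tauto
  · intro i
    simp only [mem_inter, mem_filter, mem_univ, true_and]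
    tauto

variable [DecidableEq κ]

lemma card_filter_eq_sum_card_fiberwise [Fintype κ] (g : ι → κ) (p : ι → Prop)
    [DecidablePred p] : #{i | p i} = ∑ j, #{i | g i = j ∧ p i} := by
  rw [card_eq_sum_card_fiberwise (f := g) (t := univ) fun _ _ => mem_coe.2 (mem_univ _)]
  simp only [filter_filter, and_comm]

lemma exists_sign_vector_card_fiber (g : ι → κ) (p : ι → Prop) [DecidablePred p] (a c : κ → ℕ)
    (ha : ∀ j, a j ≤ #{i | g i = j ∧ p i})
    (hc : ∀ j, #{i | g i = j ∧ p i} + c j ≤ #{i | g i = j}) :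
    ∃ w : ι → ℤ, (∀ i, w i = 1 ∨ w i = -1) ∧
      ∀ j, #{i | g i = j ∧ w i = -1} = a j + c j ∧ #{i | g i = j ∧ p i ∧ w i = -1} = a j := by
  classical
  have hc' j : c j ≤ #{i | g i = j ∧ ¬ p i} := by
    have := card_filter_add_card_filter_not (s := {i | g i = j}) (p := p)
    simp only [filter_filter] at this
    linarith [hc j]
  choose A hA hAcard using fun j => exists_subset_card_eq (ha j)
  choose C hC hCcard using fun j => exists_subset_card_eq (hc' j)
  have memA {i j} (h : i ∈ A j) : g i = j ∧ p i := by simpa using hA j h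
  have memC {i j} (h : i ∈ C j) : g i = j ∧ ¬ p i := by simpa using hC j h
  set w : ι → ℤ := fun i => if i ∈ A (g i) ∪ C (g i) then -1 else 1
  have hw i : w i = -1 ↔ i ∈ A (g i) ∪ C (g i) := by simp only [w]; split_ifs <;> simp [*]
  have hfiber j : ({i | g i = j ∧ w i = -1} : Finset ι) = A j ∪ C j := by
    ext i
    simp only [mem_filter, mem_univ, true_and, hw, mem_union]
    constructor
    · rintro ⟨rfl, h⟩
      exact h
    · rintro (h | h)
      · exact ⟨(memA h).1, (memA h).1 ▸ Or.inl h⟩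
      · exact ⟨(memC h).1, (memC h).1 ▸ Or.inr h⟩
  have hfiber_p j : ({i | g i = j ∧ p i ∧ w i = -1} : Finset ι) = A j := by
    ext i
    simp only [mem_filter, mem_univ, true_and, hw, mem_union]
    constructor
    · rintro ⟨rfl, hp, h | h⟩
      exacts [h, absurd hp (memC h).2]
    · intro h
      exact ⟨(memA h).1, (memA h).2, (memA h).1 ▸ Or.inl h⟩
  refine ⟨w, fun i => by simp only [w]; split_ifs <;> simp, fun j => ⟨?_, ?_⟩⟩
  · rw [hfiber, card_union_of_disjoint, hAcard, hCcard]
    exact disjoint_left.2 fun i hA hC => (memC hC).2 (memA hA).2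
  · rw [hfiber_p, hAcard]

end SignVectors

lemma Fin.divNat_eq_iff {m n : ℕ} (i : Fin (m * n)) (j : Fin m) :
    i.divNat = j ↔ (j : ℕ) * n ≤ i ∧ (i : ℕ) < j * n + n := by
  have hn : 0 < n := Nat.pos_of_mul_pos_left (Nat.zero_lt_of_lt i.isLt)
  rw [Fin.ext_iff, Fin.coe_divNat, Nat.div_eq_iff hn]
  omega

lemma Fin.card_filter_divNat_eq {m n : ℕ} (j : Fin m) :
    #{i : Fin (m * n) | i.divNat = j} = n := by
  rw [← Fintype.card_subtype, Fintype.card_congr (finProdFinEquiv.symm.subtypeEquiv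
    (p := fun i => i.divNat = j) (q := fun q : Fin m × Fin n => q.1 = j) fun _ => Iff.rfl),
    Fintype.card_subtype, ← univ_product_univ, filter_product_left (· = j), card_product]
  simp [filter_eq']

section HadamardGraph

variable {t k s : ℕ} {v w : Fin (4 * t) → ℤ}

-- The quarter containing `i : Fin (4 * t)` is `i.divNat : Fin 4`.
lemma negCount_eq_card (v : Fin (4 * t) → ℤ) (j : Fin 4) :
    negCount t v j = #{i | i.divNat = j ∧ v i = -1} := by
  simp only [negCount, Fin.divNat_eq_iff, add_one_mul, and_assoc]

lemma sum_quarter (hv : IsPMVector t v) (j : Fin 4) :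
    ∑ i with i.divNat = j, v i = t - 2 * negCount t v j := by
  rw [sum_eq_card_sub_two_mul_card_filter_neg_one hv, Fin.card_filter_divNat_eq, negCount_eq_card,
    filter_filter]

lemma r1_eq : r1 t = fun i => ![1, 1, 1, 1] i.divNat := by
  funext i
  generalize i.divNat = j
  fin_cases j <;> rfl

lemma r2_eq : r2 t = fun i => ![1, 1, -1, -1] i.divNat := by
  funext i
  have := (Fin.divNat_eq_iff i i.divNat).1 rfl
  generalize i.divNat = j at this
  fin_cases j <;>
    simp only [r2, Fin.zero_eta, Fin.mk_one, Fin.reduceFinMk, Fin.isValue, Matrix.cons_val_zero,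
      Matrix.cons_val_one, Matrix.cons_val] at this ⊢ <;>
    split_ifs <;> omega

lemma r3_eq : r3 t = fun i => ![1, -1, 1, -1] i.divNat := by
  funext i
  have := (Fin.divNat_eq_iff i i.divNat).1 rfl
  generalize i.divNat = j at this
  fin_cases j <;>
    simp only [r3, Fin.zero_eta, Fin.mk_one, Fin.reduceFinMk, Fin.isValue, Matrix.cons_val_zero,
      Matrix.cons_val_one, Matrix.cons_val] at this ⊢ <;>
    split_ifs <;> omega

lemma orth_comp_divNat_iff (hv : IsPMVector t v) (c : Fin 4 → ℤ) :
    Orth t v (fun i => c i.divNat) ↔ ∑ j, c j * (t - 2 * negCount t v j) = 0 := by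
  rw [Orth, ← sum_fiberwise univ Fin.divNat]
  simp_rw [← sum_quarter hv, mul_sum]
  refine Iff.of_eq (congrArg (· = 0) (sum_congr rfl fun j _ => sum_congr rfl fun i hi => ?_))
  rw [(mem_filter.1 hi).2, mul_comm]

lemma isVertex_iff : IsVertex t v ↔ IsPMVector t v ∧ negCount t v 0 + negCount t v 1 = t ∧
    negCount t v 0 + negCount t v 2 = t ∧ negCount t v 3 = negCount t v 0 := by
  refine and_congr_right fun hv => ?_
  simp only [r1_eq, r2_eq, r3_eq, orth_comp_divNat_iff hv, Fin.sum_univ_four, Fin.isValue,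
    Matrix.cons_val_zero, Matrix.cons_val_one, Matrix.cons_val, Fin.coe_ofNat_eq_mod,
    Nat.reduceMod, one_mul, neg_mul]
  omega

lemma IsVertex.orth_iff (hv : IsVertex t v) (hw : IsVertex t w) :
    Orth t v w ↔ #{i | v i = -1 ∧ w i = -1} = t := by
  have sum_eq_zero_of_isVertex {u : Fin (4 * t) → ℤ} (hu : IsVertex t u) : ∑ i, u i = 0 := by
    simpa [Orth, r1] using hu.2.1
  rw [Orth, sum_mul_eq_of_sign hv.1 hw.1, sum_eq_zero_of_isVertex hv, sum_eq_zero_of_isVertex hw,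
    Fintype.card_fin]
  omega

lemma card_common_neg_eq_sum (v w : Fin (4 * t) → ℤ) :
    #{i | v i = -1 ∧ w i = -1} = ∑ j : Fin 4, #{i | i.divNat = j ∧ v i = -1 ∧ w i = -1} :=
  card_filter_eq_sum_card_fiberwise _ _

lemma IsKVertex.le_two_mul_add_of_orth (hv : IsKVertex t k v) (hw : IsKVertex t s w)
    (h : Orth t v w) : t ≤ 2 * (k + s) := by
  obtain ⟨hvv, rfl⟩ := hv
  obtain ⟨hwv, rfl⟩ := hw
  have hcommon := (IsVertex.orth_iff hvv hwv).1 h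
  rw [card_common_neg_eq_sum, Fin.sum_univ_four] at hcommon
  have overlap (j : Fin 4) : negCount t v j + negCount t w j ≤
      t + #{i | i.divNat = j ∧ v i = -1 ∧ w i = -1} := by
    have := card_filter_add_card_filter_le (Fin.divNat · = j) (v · = -1) (w · = -1)
    rwa [Fin.card_filter_divNat_eq, ← negCount_eq_card, ← negCount_eq_card] at this
  have h1 := overlap 1
  have h2 := overlap 2
  obtain ⟨-, hv1, hv2, -⟩ := isVertex_iff.1 hvv
  obtain ⟨-, hw1, hw2, -⟩ := isVertex_iff.1 hwv
  simp only [Fin.isValue, Fin.coe_ofNat_eq_mod, Nat.reduceMod] at h1 h2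
  omega

lemma IsKVertex.exists_orth (hv : IsKVertex t k v) (hk : 2 * k ≤ t) (hs : 2 * s ≤ t)
    (hks : t ≤ 2 * (k + s)) : ∃ w, IsKVertex t s w ∧ Orth t v w := by
  obtain ⟨hvv, hvk⟩ := hv
  obtain ⟨-, hv1, hv2, hv3⟩ := isVertex_iff.1 hvv
  obtain ⟨b, hb⟩ : ∃ b, k ≤ b ∧ s ≤ b ∧ t ≤ b + k + s ∧ b ≤ t - k ∧ b ≤ t - s ∧ b ≤ k + s :=
    ⟨max (max k s) (t - k - s), by omega⟩
  have ha (j : Fin 4) : ![0, b, t - b, 0] j ≤ #{i | i.divNat = j ∧ v i = -1} := by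
    rw [← negCount_eq_card]
    fin_cases j <;>
      simp only [Fin.zero_eta, Fin.mk_one, Fin.reduceFinMk, Fin.isValue, Matrix.cons_val_zero,
        Matrix.cons_val_one, Matrix.cons_val] <;>
      omega
  have hc (j : Fin 4) : #{i | i.divNat = j ∧ v i = -1} + ![s, t - s - b, b - s, s] j ≤
      #{i : Fin (4 * t) | i.divNat = j} := by
    rw [← negCount_eq_card, Fin.card_filter_divNat_eq]
    fin_cases j <;>
      simp only [Fin.zero_eta, Fin.mk_one, Fin.reduceFinMk, Fin.isValue, Matrix.cons_val_zero,
        Matrix.cons_val_one, Matrix.cons_val] <;>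
      omega
  obtain ⟨w, hw, hcount⟩ := exists_sign_vector_card_fiber Fin.divNat (v · = -1) _ _ ha hc
  simp only [← negCount_eq_card] at hcount
  have hw0 := (hcount 0).1
  have hw1 := (hcount 1).1
  have hw2 := (hcount 2).1
  have hw3 := (hcount 3).1
  simp only [Fin.isValue, Fin.coe_ofNat_eq_mod, Nat.reduceMod, Matrix.cons_val_zero,
    Matrix.cons_val_one, Matrix.cons_val, zero_add] at hw0 hw1 hw2 hw3
  have hwv : IsVertex t w := isVertex_iff.2 ⟨hw, by omega, by omega, by omega⟩
  refine ⟨w, ⟨hwv, by omega⟩, (IsVertex.orth_iff hvv hwv).2 ?_⟩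
  rw [card_common_neg_eq_sum, Fin.sum_univ_four, (hcount 0).2, (hcount 1).2, (hcount 2).2,
    (hcount 3).2]
  simp only [Fin.isValue, Matrix.cons_val_zero, Matrix.cons_val_one, Matrix.cons_val]
  omega

end HadamardGraph

theorem stmt_9_general (t k : ℕ) (hk : k ≤ t / 2) (v : Fin (4 * t) → ℤ)
    (hv : IsKVertex t k v) (s : ℕ) (hs : s ≤ t / 2) :
    (∃ w : Fin (4 * t) → ℤ, IsKVertex t s w ∧ Orth t v w) ↔
      (((t + 1) / 2 : ℕ) : ℤ) - (k : ℤ) ≤ (s : ℤ) := by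
  constructor
  · rintro ⟨w, hw, hvw⟩
    have := hv.le_two_mul_add_of_orth hw hvw
    omega
  · intro h
    exact hv.exists_orth (by omega) (by omega) (by omega)

/-- for a `k`-vertex `v` of `G_t` with `0 ≤ k ≤ ⌊t/2⌋` and
`0 ≤ s ≤ ⌊t/2⌋`, there exists an `s`-vertex orthogonal to `v` iff `s ≥ ⌈t/2⌉ - k`
(equivalently `2s + 2k - t ≥ 0`). -/
theorem stmt_9 (t k : ℕ) (ht : 0 < t) (hk : k ≤ t / 2) (v : Fin (4 * t) → ℤ)
    (hv : IsKVertex t k v) (s : ℕ) (hs : s ≤ t / 2) :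
    (∃ w : Fin (4 * t) → ℤ, IsKVertex t s w ∧ Orth t v w) ↔
      (((t + 1) / 2 : ℕ) : ℤ) - (k : ℤ) ≤ (s : ℤ) :=
  stmt_9_general t k hk v hv s hs
end

section
/- Let t be a positive integer. Any finite set of pairwise orthogonal vertices of G_t (a clique in G_t) has cardinality at most 4t − 3. -/
open Finset

namespace Stmt13Aux

noncomputable def B (t : ℕ) : LinearMap.BilinForm ℚ (Fin (4*t) → ℚ) :=
  Matrix.toBilin' (1 : Matrix (Fin (4*t)) (Fin (4*t)) ℚ)

lemma B_apply (t : ℕ) (v w : Fin (4*t) → ℚ) : B t v w = ∑ i, v i * w i := by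
  rw [B, Matrix.toBilin'_apply', Matrix.one_mulVec]
  rfl

lemma sum_split (t : ℕ) (g : ℕ → ℚ) :
    ∑ i ∈ range (4*t), g i =
      ∑ i ∈ Ico 0 t, g i + ∑ i ∈ Ico t (2*t), g i +
      ∑ i ∈ Ico (2*t) (3*t), g i + ∑ i ∈ Ico (3*t) (4*t), g i := by
  rw [range_eq_Ico,
    ← Finset.sum_Ico_consecutive g (by omega : (0:ℕ) ≤ 3*t) (by omega : 3*t ≤ 4*t),
    ← Finset.sum_Ico_consecutive g (by omega : (0:ℕ) ≤ 2*t) (by omega : 2*t ≤ 3*t),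
    ← Finset.sum_Ico_consecutive g (by omega : (0:ℕ) ≤ t) (by omega : t ≤ 2*t)]

lemma sum_blocks (t : ℕ) (g : ℕ → ℚ) (a b c d : ℚ)
    (h1 : ∀ i, i < t → g i = a) (h2 : ∀ i, t ≤ i → i < 2*t → g i = b)
    (h3 : ∀ i, 2*t ≤ i → i < 3*t → g i = c) (h4 : ∀ i, 3*t ≤ i → i < 4*t → g i = d) :
    ∑ i ∈ range (4*t), g i = (a+b+c+d) * t := by
  rw [sum_split]
  rw [Finset.sum_congr rfl (fun i hi => h1 i (by simp at hi; omega)),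
      Finset.sum_congr rfl (fun i hi => h2 i (by simp at hi; omega) (by simp at hi; omega)),
      Finset.sum_congr rfl (fun i hi => h3 i (by simp at hi; omega) (by simp at hi; omega)),
      Finset.sum_congr rfl (fun i hi => h4 i (by simp at hi; omega) (by simp at hi; omega)),
      Finset.sum_const, Finset.sum_const, Finset.sum_const, Finset.sum_const,
      Nat.card_Ico, Nat.card_Ico, Nat.card_Ico, Nat.card_Ico]
  have e1 : t - 0 = t := by omega
  have e2 : 2*t - t = t := by omega
  have e3 : 3*t - 2*t = t := by omega
  have e4 : 4*t - 3*t = t := by omega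
  rw [e1, e2, e3, e4]
  simp [nsmul_eq_mul]
  ring

/-- The three rows as a family over `Fin 3`. -/
def rows (t : ℕ) : Fin 3 → (Fin (4*t) → ℤ)
  | 0 => r1 t
  | 1 => r2 t
  | 2 => r3 t

lemma r1_pm (t : ℕ) : IsPMVector t (r1 t) := fun _ => Or.inl rfl

lemma r2_pm (t : ℕ) : IsPMVector t (r2 t) := by
  intro i; unfold r2; split_ifs <;> simp

lemma r3_pm (t : ℕ) : IsPMVector t (r3 t) := by
  intro i; unfold r3; split_ifs <;> simp

lemma rows_pm (t : ℕ) (j : Fin 3) : IsPMVector t (rows t j) := by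
  fin_cases j
  · exact r1_pm t
  · exact r2_pm t
  · exact r3_pm t

lemma o12 (t : ℕ) : ∑ i : Fin (4*t), ((r1 t i : ℚ) * (r2 t i : ℚ)) = 0 := by
  have h : ∀ i : Fin (4*t), ((r1 t i : ℚ) * (r2 t i : ℚ)) =
      (fun m : ℕ => if m < 2*t then (1:ℚ) else -1) (i : ℕ) := by
    intro i
    simp only [r1, r2, apply_ite (Int.cast : ℤ → ℚ)]
    norm_num
  refine (Finset.sum_congr rfl (fun i _ => h i)).trans
    ((Fin.sum_univ_eq_sum_range (fun m : ℕ => if m < 2*t then (1:ℚ) else -1) (4*t)).trans ?_)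
  rw [sum_blocks t _ 1 1 (-1) (-1)
    (fun i hi => if_pos (by omega))
    (fun i hi1 hi2 => if_pos (by omega))
    (fun i hi1 hi2 => if_neg (by omega))
    (fun i hi1 hi2 => if_neg (by omega))]
  ring

lemma o13 (t : ℕ) : ∑ i : Fin (4*t), ((r1 t i : ℚ) * (r3 t i : ℚ)) = 0 := by
  have h : ∀ i : Fin (4*t), ((r1 t i : ℚ) * (r3 t i : ℚ)) =
      (fun m : ℕ => if m < t ∨ (2*t ≤ m ∧ m < 3*t) then (1:ℚ) else -1) (i : ℕ) := by
    intro i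
    simp only [r1, r3, apply_ite (Int.cast : ℤ → ℚ)]
    norm_num
  refine (Finset.sum_congr rfl (fun i _ => h i)).trans
    ((Fin.sum_univ_eq_sum_range
      (fun m : ℕ => if m < t ∨ (2*t ≤ m ∧ m < 3*t) then (1:ℚ) else -1) (4*t)).trans ?_)
  rw [sum_blocks t _ 1 (-1) 1 (-1)
    (fun i hi => if_pos (by omega))
    (fun i hi1 hi2 => if_neg (by omega))
    (fun i hi1 hi2 => if_pos (by omega))
    (fun i hi1 hi2 => if_neg (by omega))]
  ring

lemma o23 (t : ℕ) : ∑ i : Fin (4*t), ((r2 t i : ℚ) * (r3 t i : ℚ)) = 0 := by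
  have h : ∀ i : Fin (4*t), ((r2 t i : ℚ) * (r3 t i : ℚ)) =
      (fun m : ℕ => (if m < 2*t then (1:ℚ) else -1) *
        (if m < t ∨ (2*t ≤ m ∧ m < 3*t) then (1:ℚ) else -1)) (i : ℕ) := by
    intro i
    simp only [r2, r3, apply_ite (Int.cast : ℤ → ℚ)]
    norm_num
  refine (Finset.sum_congr rfl (fun i _ => h i)).trans
    ((Fin.sum_univ_eq_sum_range
      (fun m : ℕ => (if m < 2*t then (1:ℚ) else -1) *
        (if m < t ∨ (2*t ≤ m ∧ m < 3*t) then (1:ℚ) else -1)) (4*t)).trans ?_)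
  rw [sum_blocks t _ 1 (-1) (-1) 1
    (fun i hi => by rw [if_pos (by omega : i < 2*t), if_pos (by omega)]; norm_num)
    (fun i hi1 hi2 => by rw [if_pos (by omega : i < 2*t), if_neg (by omega)]; norm_num)
    (fun i hi1 hi2 => by rw [if_neg (by omega : ¬ i < 2*t), if_pos (by omega)]; norm_num)
    (fun i hi1 hi2 => by rw [if_neg (by omega : ¬ i < 2*t), if_neg (by omega)]; norm_num)]
  ring

lemma rows_orth (t : ℕ) (j k : Fin 3) (hjk : j ≠ k) :
    ∑ i : Fin (4*t), ((rows t j i : ℚ) * (rows t k i : ℚ)) = 0 := by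
  fin_cases j <;> fin_cases k
  · exact absurd rfl hjk
  · exact o12 t
  · exact o13 t
  · show ∑ i : Fin (4*t), ((r2 t i : ℚ) * (r1 t i : ℚ)) = 0
    rw [Finset.sum_congr rfl (fun i (_ : i ∈ univ) => mul_comm ((r2 t i : ℚ)) ((r1 t i : ℚ)))]
    exact o12 t
  · exact absurd rfl hjk
  · exact o23 t
  · show ∑ i : Fin (4*t), ((r3 t i : ℚ) * (r1 t i : ℚ)) = 0
    rw [Finset.sum_congr rfl (fun i (_ : i ∈ univ) => mul_comm ((r3 t i : ℚ)) ((r1 t i : ℚ)))]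
    exact o13 t
  · show ∑ i : Fin (4*t), ((r3 t i : ℚ) * (r2 t i : ℚ)) = 0
    rw [Finset.sum_congr rfl (fun i (_ : i ∈ univ) => mul_comm ((r3 t i : ℚ)) ((r2 t i : ℚ)))]
    exact o23 t
  · exact absurd rfl hjk

lemma self_norm (t : ℕ) (v : Fin (4*t) → ℤ) (hv : IsPMVector t v) :
    ∑ i : Fin (4*t), ((v i : ℚ) * (v i : ℚ)) = 4*t := by
  have h : ∀ i : Fin (4*t), (v i : ℚ) * (v i : ℚ) = 1 := by
    intro i; rcases hv i with h | h <;> rw [h] <;> norm_num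
  rw [Finset.sum_congr rfl fun i _ => h i]
  simp

end Stmt13Aux

/-- any clique in `G_t` (finite set of pairwise orthogonal vertices) has
cardinality at most `4t - 3`. -/
theorem stmt_13 (t : ℕ) (ht : 0 < t) (S : Finset (Fin (4 * t) → ℤ))
    (hvert : ∀ v ∈ S, IsVertex t v)
    (horth : ∀ v ∈ S, ∀ w ∈ S, v ≠ w → Orth t v w) :
    S.card ≤ 4 * t - 3 := by
  classical
  suffices h : S.card + 3 ≤ 4 * t by omega
  let f : (↥S ⊕ Fin 3) → (Fin (4*t) → ℚ) :=
    Sum.elim (fun v => fun i => ((v : Fin (4*t) → ℤ) i : ℚ))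
      (fun j => fun i => ((Stmt13Aux.rows t j) i : ℚ))
  have castmul : ∀ (v w : Fin (4*t) → ℤ),
      (∑ i, v i * w i = 0) → ∑ i : Fin (4*t), ((v i : ℚ) * (w i : ℚ)) = 0 := by
    intro v w h0
    have : ((∑ i, v i * w i : ℤ) : ℚ) = 0 := by rw [h0]; norm_num
    push_cast at this
    exact this
  have hBorth : (Stmt13Aux.B t).iIsOrtho f := by
    rw [LinearMap.BilinForm.iIsOrtho_def]
    rintro (⟨v, hvS⟩ | j) (⟨w, hwS⟩ | k) hne <;>
      simp only [f, Sum.elim_inl, Sum.elim_inr] <;> rw [Stmt13Aux.B_apply]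
    · have hvw : v ≠ w := by
        intro h; apply hne; subst h; rfl
      exact castmul v w (horth v hvS w hwS hvw)
    · obtain ⟨hpm, h1, h2, h3⟩ := hvert v hvS
      have h0 : ∑ i, v i * (Stmt13Aux.rows t k) i = 0 := by
        fin_cases k
        exacts [h1, h2, h3]
      exact castmul v _ h0
    · obtain ⟨hpm, h1, h2, h3⟩ := hvert w hwS
      have h0 : ∑ i, w i * (Stmt13Aux.rows t j) i = 0 := by
        fin_cases j
        exacts [h1, h2, h3]
      have h0' := castmul w _ h0
      rw [Finset.sum_congr rfl (fun i (_ : i ∈ univ) =>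
        mul_comm ((Stmt13Aux.rows t j i : ℚ)) ((w i : ℚ)))]
      exact h0'
    · have hjk : j ≠ k := fun h => hne (by rw [h])
      exact Stmt13Aux.rows_orth t j k hjk
  have hself : ∀ x, ¬ (Stmt13Aux.B t).IsOrtho (f x) (f x) := by
    rintro (⟨v, hvS⟩ | j) hOrth
    · have hpm := (hvert v hvS).1
      have h0 : Stmt13Aux.B t (f (Sum.inl ⟨v, hvS⟩)) (f (Sum.inl ⟨v, hvS⟩)) = 0 := hOrth
      simp only [f, Sum.elim_inl] at h0
      rw [Stmt13Aux.B_apply, Stmt13Aux.self_norm t v hpm] at h0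
      have h4t : (4 * (t:ℚ)) ≠ 0 := by positivity
      exact h4t (by linarith)
    · have hpm := Stmt13Aux.rows_pm t j
      have h0 : Stmt13Aux.B t (f (Sum.inr j)) (f (Sum.inr j)) = 0 := hOrth
      simp only [f, Sum.elim_inr] at h0
      rw [Stmt13Aux.B_apply, Stmt13Aux.self_norm t _ hpm] at h0
      have h4t : (4 * (t:ℚ)) ≠ 0 := by positivity
      exact h4t (by linarith)
  have hli : LinearIndependent ℚ f :=
    LinearMap.BilinForm.linearIndependent_of_iIsOrtho hBorth hself
  have hcard := hli.fintype_card_le_finrank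
  rw [Module.finrank_fintype_fun_eq_card] at hcard
  simpa [Fintype.card_sum, Fintype.card_coe, Fintype.card_fin] using hcard
end

section
/- Let t be a positive integer and 0 ≤ k ≤ t. If v and v' are both k-vertices of G_t, then the number of vertices of G_t orthogonal to v equals the number of vertices of G_t orthogonal to v'; that is, all k-vertices of G_t have the same degree. -/
/-!
The rows `r1`, `r2`, `r3` are constant on each quarter (the quarter of `i` is `i.divNat : Fin 4`),
so a permutation of the coordinates that preserves every quarter maps vertices to vertices and
preserves orthogonality, hence preserves degrees. Orthogonality to the three rows forces the
quarter sums of a vertex to be `s, -s, -s, s`, and for a `k`-vertex `s = t - 2k` depends only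
on `k`. So two `k`-vertices have, quarter by quarter, equally many entries `1` and `-1`, and therefore differ by a
quarter-preserving permutation.
-/

open Finset

section PlusMinusOne

variable {ι : Type*} {S : Finset ι} {v w : ι → ℤ}

theorem sum_eq_card_filter_sub_card_filter (hv : ∀ i ∈ S, v i = 1 ∨ v i = -1) :
    ∑ i ∈ S, v i = #{i ∈ S | v i = 1} - #{i ∈ S | v i = -1} := by
  have hpoint : ∀ i ∈ S, v i = (if v i = 1 then 1 else 0) - (if v i = -1 then 1 else 0) := by
    intro i hi
    rcases hv i hi with h | h <;> simp [h]
  rw [sum_congr rfl hpoint, sum_sub_distrib]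
  push_cast [card_filter]
  rfl

theorem card_eq_card_filter_add_card_filter (hv : ∀ i ∈ S, v i = 1 ∨ v i = -1) :
    #S = #{i ∈ S | v i = 1} + #{i ∈ S | v i = -1} := by
  have hpoint : ∀ i ∈ S, 1 = (if v i = 1 then 1 else 0) + (if v i = -1 then 1 else 0) := by
    intro i hi
    rcases hv i hi with h | h <;> simp [h]
  rw [card_eq_sum_ones, sum_congr rfl hpoint, sum_add_distrib, card_filter, card_filter]

theorem sum_eq_of_card_filter_eq (hv : ∀ i ∈ S, v i = 1 ∨ v i = -1)
    (hw : ∀ i ∈ S, w i = 1 ∨ w i = -1) (h : #{i ∈ S | v i = -1} = #{i ∈ S | w i = -1}) :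
    ∑ i ∈ S, v i = ∑ i ∈ S, w i := by
  have hv' := card_eq_card_filter_add_card_filter hv
  have hw' := card_eq_card_filter_add_card_filter hw
  rw [sum_eq_card_filter_sub_card_filter hv, sum_eq_card_filter_sub_card_filter hw]
  omega

theorem card_filter_eq_of_sum_eq (hv : ∀ i ∈ S, v i = 1 ∨ v i = -1)
    (hw : ∀ i ∈ S, w i = 1 ∨ w i = -1) (h : ∑ i ∈ S, v i = ∑ i ∈ S, w i) (s : ℤ) :
    #{i ∈ S | v i = s} = #{i ∈ S | w i = s} := by
  have hv' := card_eq_card_filter_add_card_filter hv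
  have hw' := card_eq_card_filter_add_card_filter hw
  rw [sum_eq_card_filter_sub_card_filter hv, sum_eq_card_filter_sub_card_filter hw] at h
  by_cases hs : s = 1 ∨ s = -1
  · rcases hs with rfl | rfl <;> omega
  · have hempty : ∀ u : ι → ℤ, (∀ i ∈ S, u i = 1 ∨ u i = -1) → #{i ∈ S | u i = s} = 0 := by
      intro u hu
      rw [card_eq_zero, filter_eq_empty_iff]
      rintro i hi rfl
      rcases hu i hi with h | h <;> simp_all
    rw [hempty v hv, hempty w hw]

end PlusMinusOne

theorem exists_perm_comp_eq {ι γ : Type*} [Fintype ι] [DecidableEq γ] {f g : ι → γ}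
    (h : ∀ c, #{i | f i = c} = #{i | g i = c}) : ∃ σ : Equiv.Perm ι, f ∘ σ = g :=
  ⟨Equiv.ofFiberEquiv fun c => Fintype.equivOfCardEq (by simp [Fintype.card_subtype, h]),
    funext (Equiv.ofFiberEquiv_map _)⟩

theorem sum_mul_comp_eq_sum_fiberwise {ι κ R : Type*} [Fintype ι] [Fintype κ] [DecidableEq κ]
    [CommSemiring R] (v : ι → R) (g : ι → κ) (e : κ → R) :
    ∑ i, v i * e (g i) = ∑ j, e j * ∑ i with g i = j, v i := by
  rw [← sum_fiberwise univ g]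
  refine sum_congr rfl fun j _ => ?_
  rw [mul_sum]
  exact sum_congr rfl fun i hi => by rw [(mem_filter.1 hi).2, mul_comm]

theorem Fin.divNat_mul_le_and_lt {m n : ℕ} (i : Fin (m * n)) :
    (i.divNat : ℕ) * n ≤ i ∧ (i : ℕ) < ((i.divNat : ℕ) + 1) * n := by
  rcases n.eq_zero_or_pos with rfl | hn
  · exact absurd i.isLt (by simp)
  · rw [Fin.coe_divNat]
    exact ⟨Nat.div_mul_le_self _ _, by linarith [Nat.lt_mul_div_succ (i : ℕ) hn]⟩

variable {t k : ℕ}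

theorem r2_apply (i : Fin (4 * t)) : r2 t i = ![1, 1, -1, -1] i.divNat := by
  obtain ⟨hlow, hhigh⟩ := Fin.divNat_mul_le_and_lt i
  generalize i.divNat = q at hlow hhigh
  fin_cases q <;> simp only [r2, Fin.reduceFinMk, Matrix.cons_val] at hlow hhigh ⊢ <;>
    split_ifs <;> omega

theorem r3_apply (i : Fin (4 * t)) : r3 t i = ![1, -1, 1, -1] i.divNat := by
  obtain ⟨hlow, hhigh⟩ := Fin.divNat_mul_le_and_lt i
  generalize i.divNat = q at hlow hhigh
  fin_cases q <;> simp only [r3, Fin.reduceFinMk, Matrix.cons_val] at hlow hhigh ⊢ <;>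
    split_ifs <;> omega

theorem negCount_zero_eq (v : Fin (4 * t) → ℤ) :
    negCount t v 0 = #{i ∈ {i : Fin (4 * t) | i.divNat = 0} | v i = -1} := by
  rw [negCount, filter_filter]
  congr 1
  refine filter_congr fun i _ => ?_
  have := i.isLt
  simp only [Fin.ext_iff, Fin.coe_divNat, Fin.isValue, Fin.coe_ofNat_eq_mod, Nat.zero_mod,
    Nat.div_eq_zero_iff]
  omega

theorem orth_comp_perm_iff (σ : Equiv.Perm (Fin (4 * t))) {v w : Fin (4 * t) → ℤ} :
    Orth t (v ∘ σ) (w ∘ σ) ↔ Orth t v w := by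
  change ∑ i, v (σ i) * w (σ i) = 0 ↔ _
  rw [Equiv.sum_comp σ fun i => v i * w i, Orth]

theorem isVertex_comp_perm_iff {σ : Equiv.Perm (Fin (4 * t))}
    (hσ : ∀ i, (σ i).divNat = i.divNat) {w : Fin (4 * t) → ℤ} :
    IsVertex t (w ∘ σ) ↔ IsVertex t w := by
  have horth : ∀ r : Fin (4 * t) → ℤ, r ∘ σ = r → (Orth t (w ∘ σ) r ↔ Orth t w r) :=
    fun r hr => by simpa only [hr] using orth_comp_perm_iff σ (v := w) (w := r)
  refine and_congr (σ.forall_congr_right (q := fun i => w i = 1 ∨ w i = -1))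
    (and_congr (horth _ rfl) (and_congr (horth _ ?_) (horth _ ?_)))
  · exact funext fun i => by simp [r2_apply, hσ]
  · exact funext fun i => by simp [r3_apply, hσ]

theorem ncard_neighbors_comp_perm {σ : Equiv.Perm (Fin (4 * t))}
    (hσ : ∀ i, (σ i).divNat = i.divNat) (v : Fin (4 * t) → ℤ) :
    {w | IsVertex t w ∧ Orth t (v ∘ σ) w}.ncard = {w | IsVertex t w ∧ Orth t v w}.ncard := by
  have hpre : {w | IsVertex t w ∧ Orth t v w}
      = (fun w => w ∘ σ) ⁻¹' {w | IsVertex t w ∧ Orth t (v ∘ σ) w} := by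
    ext w
    simp only [Set.mem_ofPred_eq, Set.mem_preimage, isVertex_comp_perm_iff hσ,
      orth_comp_perm_iff]
  rw [hpre, Set.ncard_preimage_of_injective_subset_range σ.surjective.injective_comp_right]
  exact (σ.injective.surjective_comp_right (γ := ℤ)).range_eq ▸ Set.subset_univ _

theorem IsVertex.sum_quarter_eq {v : Fin (4 * t) → ℤ} (hv : IsVertex t v) (q : Fin 4) :
    ∑ i with i.divNat = q, v i = ![1, -1, -1, 1] q * ∑ i with i.divNat = 0, v i := by
  obtain ⟨-, h1, h2, h3⟩ := hv
  rw [Orth, ← sum_fiberwise univ Fin.divNat] at h1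
  simp only [Orth, funext r2_apply, funext r3_apply, sum_mul_comp_eq_sum_fiberwise] at h2 h3
  simp only [r1, mul_one, Fin.sum_univ_four] at h1 h2 h3
  simp only [one_mul, neg_mul, Fin.isValue, Matrix.cons_val] at h2 h3
  fin_cases q <;> simp <;> linarith

theorem IsKVertex.card_fiber_eq {v v' : Fin (4 * t) → ℤ} (hv : IsKVertex t k v)
    (hv' : IsKVertex t k v') (c : Fin 4 × ℤ) :
    #{i | (i.divNat, v i) = c} = #{i | (i.divNat, v' i) = c} := by
  obtain ⟨q, s⟩ := c
  have pm : ∀ {u} (S : Finset (Fin (4 * t))), IsPMVector t u → ∀ i ∈ S, u i = 1 ∨ u i = -1 :=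
    fun _ hu i _ => hu i
  have hsum0 := sum_eq_of_card_filter_eq (pm _ hv.1.1) (pm _ hv'.1.1)
    (by rw [← negCount_zero_eq, ← negCount_zero_eq, hv.2, hv'.2])
  simp only [Prod.mk.injEq, ← filter_filter]
  refine card_filter_eq_of_sum_eq (pm _ hv.1.1) (pm _ hv'.1.1) ?_ s
  rw [hv.1.sum_quarter_eq, hv'.1.sum_quarter_eq, hsum0]

theorem stmt_14_general (t k : ℕ) (v v' : Fin (4 * t) → ℤ)
    (hv : IsKVertex t k v) (hv' : IsKVertex t k v') :
    {w : Fin (4 * t) → ℤ | IsVertex t w ∧ Orth t v w}.ncard =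
      {w : Fin (4 * t) → ℤ | IsVertex t w ∧ Orth t v' w}.ncard := by
  obtain ⟨σ, hσ⟩ := exists_perm_comp_eq (hv.card_fiber_eq hv')
  have hquarter : ∀ i, (σ i).divNat = i.divNat := fun i => congrArg Prod.fst (congrFun hσ i)
  have hvσ : v ∘ σ = v' := funext fun i => congrArg Prod.snd (congrFun hσ i)
  rw [← hvσ, ncard_neighbors_comp_perm hquarter]

/-- all `k`-vertices of `G_t` have the same degree, i.e. the number of
vertices of `G_t` orthogonal to a `k`-vertex does not depend on the chosen `k`-vertex. -/
theorem stmt_14 (t k : ℕ) (ht : 0 < t) (hk : k ≤ t) (v v' : Fin (4 * t) → ℤ)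
    (hv : IsKVertex t k v) (hv' : IsKVertex t k v') :
    {w : Fin (4 * t) → ℤ | IsVertex t w ∧ Orth t v w}.ncard =
      {w : Fin (4 * t) → ℤ | IsVertex t w ∧ Orth t v' w}.ncard :=
  stmt_14_general t k v v' hv hv'
end

section
/- Let G be a finite group and f a binary cocycle on G. For any two distinct elements g_i, g_k of G, the rows of the cocyclic matrix M_f indexed by g_i and g_k are orthogonal, i.e., ∑_{h∈G} f(g_i, h) * f(g_k, h) = 0, if and only if the row indexed by g_i * g_k⁻¹ sums to zero, i.e., ∑_{h∈G} f(g_i * g_k⁻¹, h) = 0. -/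
/-- for a binary cocycle `f` on a finite group `G` and distinct
`g_i, g_k ∈ G`, the rows of the cocyclic matrix `M_f` indexed by `g_i` and `g_k` are
orthogonal iff the row indexed by `g_i * g_k⁻¹` sums to zero. -/
theorem stmt_16 {G : Type*} [Group G] [Fintype G] (f : G → G → ℤ)
    (hpm : ∀ a b, f a b = 1 ∨ f a b = -1)
    (hcoc : ∀ a b c, f a b * f (a * b) c = f b c * f a (b * c))
    (gi gk : G) (hne : gi ≠ gk) :
    (∑ h, f gi h * f gk h = 0) ↔ (∑ h, f (gi * gk⁻¹) h = 0) := by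
  have key : ∀ h, f gi h * f gk h = f (gi * gk⁻¹) gk * f (gi * gk⁻¹) (gk * h) := by
    intro h
    have h1 := hcoc (gi * gk⁻¹) gk h
    rw [inv_mul_cancel_right] at h1
    rcases hpm gk h with h2 | h2 <;> rcases hpm (gi * gk⁻¹) gk with h3 | h3 <;>
      rw [h2, h3] at h1 ⊢ <;> linarith
  have hsum : ∑ h, f gi h * f gk h = f (gi * gk⁻¹) gk * ∑ h, f (gi * gk⁻¹) h := by
    rw [Finset.mul_sum]
    simp only [key]
    exact Fintype.sum_equiv (Equiv.mulLeft gk) _ _ (fun h => rfl)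
  rw [hsum]
  rcases hpm (gi * gk⁻¹) gk with h3 | h3 <;> rw [h3] <;> constructor <;>
    intro h <;> linarith
end

section
/- Let G be a finite group of order n and f a binary cocycle on G. Suppose there exists g ∈ G with g ≠ 1 such that ∑_{h∈G} f(g, h) ≠ 0 (so that the cocyclic matrix M_f is not Hadamard). Then every subset S of G whose corresponding rows of M_f are pairwise orthogonal (i.e., ∑_{h∈G} f(a, h) * f(b, h) = 0 for all distinct a, b ∈ S) satisfies 2 * |S| ≤ n; that is, the depth of any partial Hadamard matrix formed by rows of M_f is at most n/2. -/
/-! Left multiplication by `g` moves row `a` of `M_f` to a row that is never orthogonal to it: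
the cocycle identity gives `f(a, h) f(g a, h) = f(g, a) f(g, a h)`, so the inner product of
rows `a` and `g a` is `± ∑_h f(g, h) ≠ 0`. Hence a set `S` of pairwise orthogonal rows is
disjoint from its translate `g S`, and `2 |S| = |S ∪ g S| ≤ n`. -/

open Finset Pointwise

theorem Finset.two_mul_card_le_of_disjoint_smul {G : Type*} [Group G] [Fintype G] [DecidableEq G]
    {S : Finset G} {g : G} (hdisj : Disjoint S (g • S)) : 2 * #S ≤ Fintype.card G :=
  calc 2 * #S = #S + #(g • S) := by rw [card_smul_finset]; ring
    _ = #(S ∪ g • S) := (card_union_of_disjoint hdisj).symm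
    _ ≤ Fintype.card G := card_le_univ _

section Cocycle

variable {G : Type*} [Group G] {f : G → G → ℤ}

theorem cocycle_mul_mul_left (hpm : ∀ a b, f a b = 1 ∨ f a b = -1)
    (hcoc : ∀ a b c, f a b * f (a * b) c = f b c * f a (b * c)) (g a h : G) :
    f a h * f (g * a) h = f g a * f g (a * h) := by
  have := hcoc g a h
  rcases hpm a h with h₁ | h₁ <;> rcases hpm g a with h₂ | h₂ <;>
    rw [h₁, h₂] at this ⊢ <;> linarith

theorem sum_cocycle_mul_mul_left [Fintype G] (hpm : ∀ a b, f a b = 1 ∨ f a b = -1)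
    (hcoc : ∀ a b c, f a b * f (a * b) c = f b c * f a (b * c)) (g a : G) :
    ∑ h, f a h * f (g * a) h = f g a * ∑ h, f g h := by
  simp_rw [cocycle_mul_mul_left hpm hcoc g a, ← mul_sum]
  congr 1
  exact Fintype.sum_equiv (Equiv.mulLeft a) _ _ fun _ => rfl

end Cocycle

/-- if a binary cocycle `f` on a finite group `G` of order `n` has some
row `g ≠ 1` of the cocyclic matrix `M_f` not summing to zero, then any set `S` of
elements of `G` whose corresponding rows of `M_f` are pairwise orthogonal satisfies
`2|S| ≤ n`: the depth of any partial Hadamard matrix formed by rows of `M_f` is at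
most half of its size. -/
theorem stmt_17 {G : Type*} [Group G] [Fintype G] (f : G → G → ℤ)
    (hpm : ∀ a b, f a b = 1 ∨ f a b = -1)
    (hcoc : ∀ a b c, f a b * f (a * b) c = f b c * f a (b * c))
    (g : G) (hg : g ≠ 1) (hsum : ∑ h, f g h ≠ 0)
    (S : Finset G) (hS : ∀ a ∈ S, ∀ b ∈ S, a ≠ b → ∑ h, f a h * f b h = 0) :
    2 * S.card ≤ Fintype.card G := by
  classical
  refine two_mul_card_le_of_disjoint_smul (g := g) (disjoint_right.2 ?_)
  rintro _ hx hxS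
  obtain ⟨a, ha, rfl⟩ := mem_smul_finset.1 hx
  have hne : a ≠ g * a := fun h => hg (by rwa [right_eq_mul] at h)
  have hfga : f g a ≠ 0 := by rcases hpm g a with h | h <;> simp [h]
  have horth := hS a ha (g * a) hxS hne
  rw [sum_cocycle_mul_mul_left hpm hcoc] at horth
  exact mul_ne_zero hfga hsum horth
end
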